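/- arXiv:1804.04658 — 3 statements merged into one kernel-verified Lean document; each statement's English description precedes it below -/
import Mathlib

section
/- For every m ≥ 1, in every proper 4-coloring of the double wheel D_{2m+1}, the two hub vertices u and v receive the same color; that is, {u, v} is a color identical pair of D_{2m+1}. -/
/-!
If the hubs had different colours, every rim vertex would avoid both of them, so the rim, an
odd cycle, would be properly coloured with the remaining two colours. But an odd cycle has
chromatic number three.
-/

/-- The double wheel `D_n`: the cycle graph on `Fin n` (vertices `Sum.inl i`) together
with two new nonadjacent hub vertices `Sum.inr 0` and `Sum.inr 1`, each adjacent to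
every cycle vertex. -/
def doubleWheel (n : ℕ) : SimpleGraph (Fin n ⊕ Fin 2) :=
  SimpleGraph.fromRel (fun x y =>
    (∃ (k : Fin 2) (i : Fin n), x = Sum.inr k ∧ y = Sum.inl i) ∨
    (∃ i j : Fin n, x = Sum.inl i ∧ y = Sum.inl j ∧ (SimpleGraph.cycleGraph n).Adj i j))

namespace SimpleGraph

theorem Coloring.colorable_sub_two_of_forall_adj {V W α : Type*} [Fintype α] [DecidableEq α]
    {G : SimpleGraph V} {H : SimpleGraph W} (c : G.Coloring α) (f : H →g G) {u v : V}
    (hu : ∀ w, G.Adj u (f w)) (hv : ∀ w, G.Adj v (f w)) (huv : c u ≠ c v) :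
    H.Colorable (Fintype.card α - 2) := by
  let avoiding : H.Coloring ({c u, c v}ᶜ : Finset α) :=
    Coloring.mk (fun w ↦ ⟨c (f w), by simp [(c.valid (hu w)).symm, (c.valid (hv w)).symm]⟩)
      fun hadj h ↦ c.valid (f.map_adj hadj) (congrArg Subtype.val h)
  simpa only [Fintype.card_coe, Finset.card_compl, Finset.card_pair huv] using avoiding.colorable

end SimpleGraph

open SimpleGraph

theorem doubleWheel_adj_hub {n : ℕ} (k : Fin 2) (i : Fin n) :
    (doubleWheel n).Adj (Sum.inr k) (Sum.inl i) :=
  ⟨by simp, Or.inl (Or.inl ⟨k, i, rfl, rfl⟩)⟩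

def cycleGraphHomDoubleWheel (n : ℕ) : cycleGraph n →g doubleWheel n where
  toFun := Sum.inl
  map_rel' {i j} h := ⟨by simp [h.ne], Or.inl (Or.inr ⟨i, j, rfl, rfl, h⟩)⟩

/-- For every `m ≥ 1`, in every proper `4`-coloring of the double wheel `D_{2m+1}`
the two hubs receive the same color: `{u, v}` is a color identical pair. -/
theorem doubleWheel_hubs_color_identical (m : ℕ) (hm : 1 ≤ m)
    (c : (doubleWheel (2 * m + 1)).Coloring (Fin 4)) :
    c (Sum.inr 0) = c (Sum.inr 1) := by
  by_contra hne
  have hrim : (cycleGraph (2 * m + 1)).Colorable 2 :=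
    c.colorable_sub_two_of_forall_adj (cycleGraphHomDoubleWheel _)
      (doubleWheel_adj_hub 0) (doubleWheel_adj_hub 1) hne
  have hodd := chromaticNumber_cycleGraph_of_odd (2 * m + 1) (by omega) (odd_two_mul_add_one m)
  have hle := hrim.chromaticNumber_le
  rw [hodd] at hle
  norm_num at hle
end

section
/- Fix n ≥ 1 and odd integers 2m_1+1, ..., 2m_n+1 with each m_i ≥ 1, and consider the wheel chain graph W(m_1, ..., m_n) with hub vertices h_0, h_1, ..., h_n and pairwise disjoint cycles C_1, ..., C_n, where C_i is a cycle on 2m_i+1 vertices, and where for each i both h_{i-1} and h_i are adjacent to every vertex of C_i (and there are no other edges). Then in every proper 4-coloring of W(m_1, ..., m_n), all the hub vertices h_0, h_1, ..., h_n receive the same color. -/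
/-!
Two consecutive hubs are both adjacent to every vertex of the odd cycle between them. If they
had different colours in a proper 4-colouring, that cycle would be properly coloured by the two
remaining colours, which is impossible for an odd cycle. Hence consecutive hubs share a colour,
and so do all hubs.
-/

/-- The wheel chain `W(m_1, …, m_n)`: hub vertices `h_0, …, h_n` (given as `Sum.inl i`
for `i : Fin (n+1)`) and pairwise disjoint odd cycles `C_1, …, C_n`, where the `i`-th
cycle has vertices `Sum.inr ⟨i, a⟩` for `a : Fin (2 * m i + 1)` carrying the adjacency
of the cycle graph on `2 * m i + 1` vertices, and where both `h_{i-1} = Sum.inl i.castSucc`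
and `h_i = Sum.inl i.succ` are adjacent to every vertex of the `i`-th cycle;
there are no other edges. -/
def wheelChain (n : ℕ) (m : Fin n → ℕ) :
    SimpleGraph (Fin (n + 1) ⊕ (Σ i : Fin n, Fin (2 * m i + 1))) :=
  SimpleGraph.fromRel (fun x y =>
    (∃ (i : Fin n) (a b : Fin (2 * m i + 1)),
      x = Sum.inr ⟨i, a⟩ ∧ y = Sum.inr ⟨i, b⟩ ∧
        (SimpleGraph.cycleGraph (2 * m i + 1)).Adj a b) ∨
    (∃ (i : Fin n) (a : Fin (2 * m i + 1)),
      (x = Sum.inl i.castSucc ∨ x = Sum.inl i.succ) ∧ y = Sum.inr ⟨i, a⟩))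

namespace SimpleGraph

theorem not_colorable_two_cycleGraph_of_odd {k : ℕ} (hk : 3 ≤ k) (hodd : Odd k) :
    ¬ (cycleGraph k).Colorable 2 := fun h => by
  have := h.chromaticNumber_le
  rw [chromaticNumber_cycleGraph_of_odd k (by omega) hodd] at this
  exact absurd this (by decide)

theorem Coloring.colorable_of_forall_notMem {V α : Type*} {G : SimpleGraph V}
    [Fintype α] [DecidableEq α] (C : G.Coloring α) (s : Finset α) (hC : ∀ v, C v ∉ s) :
    G.Colorable (Fintype.card α - s.card) := by
  let C' : G.Coloring {z // z ∈ sᶜ} :=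
    Coloring.mk (fun v => ⟨C v, Finset.mem_compl.mpr (hC v)⟩)
      fun hadj heq => C.valid hadj (congrArg Subtype.val heq)
  simpa [Finset.card_compl] using C'.colorable

end SimpleGraph

open SimpleGraph

namespace wheelChain

variable {n : ℕ} {m : Fin n → ℕ}

def cycleHom (i : Fin n) : cycleGraph (2 * m i + 1) →g wheelChain n m where
  toFun a := Sum.inr ⟨i, a⟩
  map_rel' {a b} hab := by
    rw [wheelChain, fromRel_adj]
    refine ⟨fun h => hab.ne ?_, Or.inl (Or.inl ⟨i, a, b, rfl, rfl, hab⟩)⟩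
    simpa using h

theorem adj_castSucc_cycle (i : Fin n) (a : Fin (2 * m i + 1)) :
    (wheelChain n m).Adj (Sum.inl i.castSucc) (Sum.inr ⟨i, a⟩) := by
  rw [wheelChain, fromRel_adj]
  exact ⟨by simp, Or.inl (Or.inr ⟨i, a, Or.inl rfl, rfl⟩)⟩

theorem adj_succ_cycle (i : Fin n) (a : Fin (2 * m i + 1)) :
    (wheelChain n m).Adj (Sum.inl i.succ) (Sum.inr ⟨i, a⟩) := by
  rw [wheelChain, fromRel_adj]
  exact ⟨by simp, Or.inl (Or.inr ⟨i, a, Or.inr rfl, rfl⟩)⟩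

theorem coloring_inl_castSucc_eq_coloring_inl_succ {α : Type*} [Fintype α] (hα : Fintype.card α ≤ 4)
    (c : (wheelChain n m).Coloring α) (i : Fin n) (hmi : 1 ≤ m i) :
    c (Sum.inl i.castSucc) = c (Sum.inl i.succ) := by
  classical
  by_contra hne
  have hcycle := Coloring.colorable_of_forall_notMem (c.comp (cycleHom i))
    {c (Sum.inl i.castSucc), c (Sum.inl i.succ)} fun a => by
      simp only [Finset.mem_insert, Finset.mem_singleton, not_or]
      exact ⟨(c.valid (adj_castSucc_cycle i a)).symm, (c.valid (adj_succ_cycle i a)).symm⟩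
  rw [Finset.card_pair hne] at hcycle
  exact not_colorable_two_cycleGraph_of_odd (by omega) (odd_two_mul_add_one _)
    (hcycle.mono (by omega))

theorem coloring_inl_eq_coloring_inl_zero {α : Type*} [Fintype α] (hα : Fintype.card α ≤ 4)
    (hm : ∀ i, 1 ≤ m i) (c : (wheelChain n m).Coloring α) (j : Fin (n + 1)) :
    c (Sum.inl j) = c (Sum.inl 0) := by
  induction j using Fin.induction with
  | zero => rfl
  | succ i ih => exact (coloring_inl_castSucc_eq_coloring_inl_succ hα c i (hm i)).symm.trans ih

end wheelChain

theorem wheelChain_hubs_color_identical_general (n : ℕ)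
    (m : Fin n → ℕ) (hm : ∀ i, 1 ≤ m i)
    (c : (wheelChain n m).Coloring (Fin 4)) :
    ∀ i j : Fin (n + 1), c (Sum.inl i) = c (Sum.inl j) := fun i j => by
  have hα : Fintype.card (Fin 4) ≤ 4 := (Fintype.card_fin 4).le
  rw [wheelChain.coloring_inl_eq_coloring_inl_zero hα hm c i, wheelChain.coloring_inl_eq_coloring_inl_zero hα hm c j]

/-- In every proper `4`-coloring of the wheel chain `W(m_1, …, m_n)` (with `n ≥ 1` and
every `m i ≥ 1`), all the hub vertices `h_0, …, h_n` receive the same color. -/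
theorem wheelChain_hubs_color_identical (n : ℕ) (hn : 1 ≤ n)
    (m : Fin n → ℕ) (hm : ∀ i, 1 ≤ m i)
    (c : (wheelChain n m).Coloring (Fin 4)) :
    ∀ i j : Fin (n + 1), c (Sum.inl i) = c (Sum.inl j) :=
  wheelChain_hubs_color_identical_general n m hm c
end

section
/- Fix n ≥ 1 and odd integers 2m_1+1, ..., 2m_n+1 with each m_i ≥ 1, and let W(m_1, ..., m_n) be the wheel chain with hubs h_0, ..., h_n and disjoint odd cycles C_1, ..., C_n, where for each i both h_{i-1} and h_i are adjacent to every vertex of C_i. Then the chromatic number of W(m_1, ..., m_n) is 4, while the graph obtained from W(m_1, ..., m_n) by adding the edge h_0 h_n has chromatic number 5. -/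
namespace SimpleGraph

variable {V W α : Type*} {G : SimpleGraph V} {H : SimpleGraph W}

lemma cycleGraph_not_colorable_two {k : ℕ} (hk : 2 ≤ k) (hodd : Odd k) :
    ¬ (cycleGraph k).Colorable 2 :=
  (chromaticNumber_eq_iff_colorable_not_colorable.mp
    (chromaticNumber_cycleGraph_of_odd k hk hodd)).2

lemma Coloring.colorable_of_hom_of_forall_notMem [Fintype α] [DecidableEq α]
    (C : G.Coloring α) (f : H →g G) (s : Finset α) (hs : ∀ x, C (f x) ∉ s) :
    H.Colorable (Fintype.card α - s.card) := by
  let C' : H.Coloring {c // c ∉ s} :=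
    Coloring.mk (fun x => ⟨C (f x), hs x⟩) fun hadj h =>
      C.valid (f.map_rel hadj) (congrArg Subtype.val h)
  simpa [Fintype.card_subtype_compl] using C'.colorable

def Coloring.supEdge {u v : V} (C : G.Coloring α) (h : C u ≠ C v) :
    (G ⊔ edge u v).Coloring α :=
  Coloring.mk C fun {x y} hadj => by
    rcases hadj with hadj | hadj
    · exact C.valid hadj
    · obtain ⟨⟨rfl, rfl⟩ | ⟨rfl, rfl⟩, -⟩ := (edge_adj _ _ _ _).mp hadj
      exacts [h, h.symm]

end SimpleGraph

open SimpleGraph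

section WheelChain

variable {n : ℕ} {m : Fin n → ℕ} {α β γ : Type*}

lemma wheelChain_adj_inr {i : Fin n} {a b : Fin (2 * m i + 1)}
    (hab : (cycleGraph (2 * m i + 1)).Adj a b) :
    (wheelChain n m).Adj (.inr ⟨i, a⟩) (.inr ⟨i, b⟩) := by
  rw [wheelChain, fromRel_adj]
  exact ⟨by simp [hab.ne], .inl (.inl ⟨i, a, b, rfl, rfl, hab⟩)⟩

lemma wheelChain_adj_of_hub {i : Fin n} (a : Fin (2 * m i + 1))
    {x : Fin (n + 1) ⊕ (Σ i : Fin n, Fin (2 * m i + 1))}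
    (hx : x = .inl i.castSucc ∨ x = .inl i.succ) :
    (wheelChain n m).Adj x (.inr ⟨i, a⟩) := by
  rw [wheelChain, fromRel_adj]
  refine ⟨?_, .inl (.inr ⟨i, a, hx, rfl⟩)⟩
  rcases hx with rfl | rfl <;> simp

def wheelChain.cycleHom_s15 (i : Fin n) : cycleGraph (2 * m i + 1) →g wheelChain n m where
  toFun a := .inr ⟨i, a⟩
  map_rel' := wheelChain_adj_inr

def wheelChain.coloringSum (hub : Fin (n + 1) → β)
    (cyc : ∀ i, (cycleGraph (2 * m i + 1)).Coloring γ) :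
    (wheelChain n m).Coloring (β ⊕ γ) :=
  Coloring.mk (Sum.elim (.inl ∘ hub) fun x => .inr (cyc x.1 x.2)) fun {x y} hadj => by
    rw [wheelChain, fromRel_adj] at hadj
    obtain ⟨-, (⟨i, a, b, rfl, rfl, hab⟩ | ⟨i, a, hx, rfl⟩) |
      (⟨i, a, b, rfl, rfl, hab⟩ | ⟨i, a, hx, rfl⟩)⟩ := hadj
    · simpa using (cyc i).valid hab
    · rcases hx with rfl | rfl <;> simp
    · simpa using ((cyc i).valid hab).symm
    · rcases hx with rfl | rfl <;> simp

@[simp]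
lemma wheelChain.coloringSum_inl (hub : Fin (n + 1) → β)
    (cyc : ∀ i, (cycleGraph (2 * m i + 1)).Coloring γ) (k : Fin (n + 1)) :
    wheelChain.coloringSum hub cyc (.inl k) = .inl (hub k) :=
  rfl

lemma wheelChain_colorable_four (hm : ∀ i, 1 ≤ m i) : (wheelChain n m).Colorable 4 := by
  simpa using (wheelChain.coloringSum (fun _ => ())
    fun i => cycleGraph.tricoloring (2 * m i + 1) (by linarith [hm i])).colorable

lemma wheelChain_sup_edge_colorable_five (hn : n ≠ 0) (hm : ∀ i, 1 ≤ m i) :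
    (wheelChain n m ⊔ edge (.inl 0) (.inl (Fin.last n))).Colorable 5 := by
  have hlast : Fin.last n ≠ 0 := by simpa [Fin.ext_iff] using hn
  let C := wheelChain.coloringSum (m := m) (fun k => decide (k = 0))
    fun i => cycleGraph.tricoloring (2 * m i + 1) (by linarith [hm i])
  have hC : C (.inl 0) ≠ C (.inl (Fin.last n)) := by simp [C, hlast]
  simpa using (C.supEdge hC).colorable

lemma wheelChain_cycle_colorable [Fintype α] [DecidableEq α]
    (C : (wheelChain n m).Coloring α) (i : Fin n) :
    (cycleGraph (2 * m i + 1)).Colorable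
      (Fintype.card α - ({C (.inl i.castSucc), C (.inl i.succ)} : Finset α).card) := by
  refine C.colorable_of_hom_of_forall_notMem (wheelChain.cycleHom_s15 i) _ fun a hmem => ?_
  rcases Finset.mem_insert.mp hmem with h | h
  · exact C.valid (wheelChain_adj_of_hub a (.inl rfl)) h.symm
  · exact C.valid (wheelChain_adj_of_hub a (.inr rfl)) (Finset.mem_singleton.mp h).symm

lemma wheelChain_not_colorable_three {i : Fin n} (hm : 1 ≤ m i) :
    ¬ (wheelChain n m).Colorable 3 := by
  rintro ⟨C⟩
  refine cycleGraph_not_colorable_two (by omega) (odd_two_mul_add_one _)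
    ((wheelChain_cycle_colorable C i).mono ?_)
  have := Finset.card_pos.mpr (Finset.insert_nonempty (C (.inl i.castSucc)) {C (.inl i.succ)})
  simp only [Fintype.card_fin]
  omega

lemma wheelChain_hub_color_eq_succ (C : (wheelChain n m).Coloring (Fin 4)) {i : Fin n}
    (hm : 1 ≤ m i) : C (.inl i.castSucc) = C (.inl i.succ) := by
  by_contra hne
  refine cycleGraph_not_colorable_two (k := 2 * m i + 1) (by omega) (odd_two_mul_add_one _) ?_
  simpa [Finset.card_pair hne] using wheelChain_cycle_colorable C i

lemma wheelChain_hub_color_eq_zero (C : (wheelChain n m).Coloring (Fin 4))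
    (hm : ∀ i, 1 ≤ m i) (k : Fin (n + 1)) : C (.inl k) = C (.inl 0) := by
  induction k using Fin.induction with
  | zero => rfl
  | succ i ih => exact (wheelChain_hub_color_eq_succ C (hm i)).symm.trans ih

lemma wheelChain_sup_edge_not_colorable_four (hn : n ≠ 0) (hm : ∀ i, 1 ≤ m i) :
    ¬ (wheelChain n m ⊔ edge (.inl 0) (.inl (Fin.last n))).Colorable 4 := by
  rintro ⟨C⟩
  have hadj : (wheelChain n m ⊔ edge (.inl 0) (.inl (Fin.last n))).Adj
      (.inl 0) (.inl (Fin.last n)) :=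
    .inr ((edge_adj _ _ _ _).mpr ⟨.inl ⟨rfl, rfl⟩, by simpa [Fin.ext_iff] using hn.symm⟩)
  exact C.valid hadj
    (wheelChain_hub_color_eq_zero (C.comp (Hom.ofLE le_sup_left)) hm (Fin.last n)).symm

end WheelChain

/-- The wheel chain `W(m_1, …, m_n)` (with `n ≥ 1` and every `m i ≥ 1`) has chromatic
number `4`, while adding the edge `h_0 h_n` produces a graph of chromatic number `5`. -/
theorem wheelChain_chromaticNumber_and_join (n : ℕ) (hn : 1 ≤ n)
    (m : Fin n → ℕ) (hm : ∀ i, 1 ≤ m i) :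
    (wheelChain n m).chromaticNumber = 4 ∧
    (wheelChain n m ⊔
      SimpleGraph.fromEdgeSet {s((Sum.inl 0 : Fin (n + 1) ⊕ (Σ i : Fin n, Fin (2 * m i + 1))),
        Sum.inl (Fin.last n))}).chromaticNumber = 5 := by
  have hn0 : n ≠ 0 := by omega
  constructor
  · exact chromaticNumber_eq_iff_colorable_not_colorable (n := 3).mpr
      ⟨wheelChain_colorable_four hm, wheelChain_not_colorable_three (hm ⟨0, hn⟩)⟩
  · exact chromaticNumber_eq_iff_colorable_not_colorable (n := 4).mpr
      ⟨wheelChain_sup_edge_colorable_five hn0 hm, wheelChain_sup_edge_not_colorable_four hn0 hm⟩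
end
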